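/- A priori error estimate in the W-norm (abstract form of Theorem 4.2): Let V_h ⊆ V be a closed subspace, let u ∈ V satisfy a(u,v) = l(v) for all v ∈ V, and let u_h ∈ V_h satisfy a(u_h, v_h) = l(v_h) for all v_h ∈ V_h. Suppose there exist constants c > 0, M ≥ 0, h > 0 and a real number m > 1 such that ‖u − u_h‖_V ≤ c h^{m−1} M. Suppose further that for every w ∈ W there exists a solution v_w ∈ V of the dual problem a(φ, v_w) = ⟨w, ι(φ)⟩_W for all φ ∈ V, and that there is a constant D ≥ 0 with inf_{v_h ∈ V_h} ‖v_w − v_h‖_V ≤ D h ‖w‖_W for every w ∈ W. Then ‖ι(u) − ι(u_h)‖_W ≤ γ c D h^m M. -/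

import Mathlib

/-!
Aubin–Nitsche duality. Galerkin orthogonality makes `a (u - uh) ·` vanish on `Vh`, so testing the
dual problem for `w = ι (u - uh)` with `φ = u - uh` gives
`‖w‖² = a (u - uh) (v_w) = a (u - uh) (v_w - vh) ≤ γ ‖u - uh‖ ‖v_w - vh‖` for every `vh ∈ Vh`.
Taking the infimum over `vh` and using the approximation bound yields `‖w‖ ≤ γ D h ‖u - uh‖`,
and the energy estimate turns the extra factor `h` into `h ^ m`.
-/

theorem galerkin_orthogonality {R M N P : Type*} [CommRing R] [AddCommGroup M] [Module R M]
    [AddCommGroup N] [Module R N] [AddCommGroup P] [Module R P]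
    (a : M →ₗ[R] N →ₗ[R] P) (l : N → P) (Vh : Submodule R N)
    {u uh : M} (hu : ∀ v, a u v = l v) (huh : ∀ vh ∈ Vh, a uh vh = l vh) :
    ∀ vh ∈ Vh, a (u - uh) vh = 0 := by
  intro vh hvh
  rw [map_sub, LinearMap.sub_apply, hu, huh vh hvh, sub_self]

theorem le_mul_iInf_norm_sub_of_map_eq_zero {V : Type*} [SeminormedAddCommGroup V]
    [Module ℝ V] (f : V →ₗ[ℝ] ℝ) (K : Submodule ℝ V) (hf : ∀ v ∈ K, f v = 0)
    {C : ℝ} (hC : 0 ≤ C) (hbdd : ∀ v, f v ≤ C * ‖v‖) (z : V) :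
    f z ≤ C * ⨅ k : K, ‖z - k‖ := by
  rw [Real.mul_iInf_of_nonneg hC]
  refine le_ciInf fun k => ?_
  calc f z = f (z - k) := by rw [map_sub, hf k k.2, sub_zero]
    _ ≤ C * ‖z - k‖ := hbdd _

theorem le_of_sq_le_mul {x K : ℝ} (hx : 0 ≤ x) (hK : 0 ≤ K) (h : x ^ 2 ≤ K * x) : x ≤ K := by
  rcases hx.eq_or_lt with rfl | hpos
  · exact hK
  · exact le_of_mul_le_mul_right (by rwa [sq] at h) hpos

theorem a_priori_error_estimate_W_norm_general
    {V : Type*} [NormedAddCommGroup V] [InnerProductSpace ℝ V]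
    (a : V →ₗ[ℝ] V →ₗ[ℝ] ℝ) (l : V →L[ℝ] ℝ)
    (γ : ℝ) (hγ : 0 < γ)
    (ha_cont : ∀ u v : V, |a u v| ≤ γ * ‖u‖ * ‖v‖)
    {W : Type*} [NormedAddCommGroup W] [InnerProductSpace ℝ W]
    (ι : V →L[ℝ] W)
    (Vh : Submodule ℝ V)
    (u : V) (hu : ∀ v : V, a u v = l v)
    (uh : V) (huh_sol : ∀ vh ∈ Vh, a uh vh = l vh)
    (c M h m : ℝ) (hh : 0 < h)
    (herr : ‖u - uh‖ ≤ c * h ^ (m - 1) * M)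
    (vw : W → V) (hvw : ∀ w : W, ∀ φ : V, a φ (vw w) = (inner ℝ w (ι φ) : ℝ))
    (D : ℝ) (hD : 0 ≤ D)
    (hbound : ∀ w : W, (⨅ vh : Vh, ‖vw w - (vh : V)‖) ≤ D * h * ‖w‖) :
    ‖ι u - ι uh‖ ≤ γ * c * D * h ^ m * M := by
  set e := u - uh
  have horth := galerkin_orthogonality a l Vh hu huh_sol
  have hdual : ‖ι e‖ ^ 2 ≤ γ * ‖e‖ * D * h * ‖ι e‖ :=
    calc ‖ι e‖ ^ 2 = a e (vw (ι e)) := by rw [hvw, real_inner_self_eq_norm_sq]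
      _ ≤ γ * ‖e‖ * ⨅ vh : Vh, ‖vw (ι e) - vh‖ :=
        le_mul_iInf_norm_sub_of_map_eq_zero (a e) Vh horth (by positivity)
          (fun v => (le_abs_self _).trans (ha_cont e v)) _
      _ ≤ γ * ‖e‖ * (D * h * ‖ι e‖) := by gcongr; exact hbound _
      _ = γ * ‖e‖ * D * h * ‖ι e‖ := by ring
  calc ‖ι u - ι uh‖ = ‖ι e‖ := by rw [map_sub]
    _ ≤ γ * ‖e‖ * D * h := le_of_sq_le_mul (norm_nonneg _) (by positivity) hdual
    _ ≤ γ * (c * h ^ (m - 1) * M) * D * h := by gcongr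
    _ = γ * c * D * h ^ m * M := by
      rw [Real.rpow_sub_one hh.ne']
      field_simp

theorem a_priori_error_estimate_W_norm
    {V : Type*} [NormedAddCommGroup V] [InnerProductSpace ℝ V] [CompleteSpace V]
    (a : V →ₗ[ℝ] V →ₗ[ℝ] ℝ) (l : V →L[ℝ] ℝ)
    (γ α : ℝ) (hγ : 0 < γ) (hα : 0 < α)
    (ha_symm : ∀ u v : V, a u v = a v u)
    (ha_cont : ∀ u v : V, |a u v| ≤ γ * ‖u‖ * ‖v‖)
    (ha_coer : ∀ u : V, α * ‖u‖ ^ 2 ≤ a u u)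
    {W : Type*} [NormedAddCommGroup W] [InnerProductSpace ℝ W] [CompleteSpace W]
    (ι : V →L[ℝ] W) (hι : Function.Injective ι)
    (Vh : Submodule ℝ V) (hVh : IsClosed (Vh : Set V))
    (u : V) (hu : ∀ v : V, a u v = l v)
    (uh : V) (huh : uh ∈ Vh) (huh_sol : ∀ vh ∈ Vh, a uh vh = l vh)
    (c M h m : ℝ) (hc : 0 < c) (hM : 0 ≤ M) (hh : 0 < h) (hm : 1 < m)
    (herr : ‖u - uh‖ ≤ c * h ^ (m - 1) * M)
    (vw : W → V) (hvw : ∀ w : W, ∀ φ : V, a φ (vw w) = (inner ℝ w (ι φ) : ℝ))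
    (D : ℝ) (hD : 0 ≤ D)
    (hbound : ∀ w : W, (⨅ vh : Vh, ‖vw w - (vh : V)‖) ≤ D * h * ‖w‖) :
    ‖ι u - ι uh‖ ≤ γ * c * D * h ^ m * M :=
  a_priori_error_estimate_W_norm_general a l γ hγ ha_cont ι Vh u hu uh huh_sol c M h m hh herr vw
    hvw D hD hbound
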